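/- arXiv:2204.06613 — 3 statements merged into one kernel-verified Lean document; each statement's English description precedes it below -/
import Mathlib

section
/- Fix δ > 0 and ε > 0, and define M^z_{x,y} = x/z + y/(1−z), ζ_{x,y} = √x/(√x+√y), γ_{x,y} = (√x+√y)², σ_{x,y} = (√x+√y)^{4/3}/(x^{1/6}y^{1/6}). There exists C₀ = C₀(δ,ε) > 0 such that for all (x,y) in the cone S_δ = {x ≥ δy, y ≥ δx} and all z ∈ [ε, 1−ε]: |M^z_{x,y} − γ_{x,y} − σ_{x,y}³·(z − ζ_{x,y})²| ≤ C₀·(x+y)·|z − ζ_{x,y}|³. -/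
set_option maxHeartbeats 1000000 in
/-- Uniform Taylor estimate for the stationary mean function `M^z_{x,y} = x/z + y/(1−z)`
around its minimizer `ζ_{x,y} = √x/(√x+√y)`:
`|M^z − γ − σ³ (z−ζ)²| ≤ C₀ (x+y) |z−ζ|³` on the cone `S_δ`, uniformly in
`z ∈ [ε, 1−ε]`. -/
theorem mean_function_taylor_estimate (δ ε : ℝ) (hδ : 0 < δ) (hε : 0 < ε) :
    ∃ C₀ : ℝ, 0 < C₀ ∧
      ∀ x y z : ℝ, 0 < x → 0 < y → δ * y ≤ x → δ * x ≤ y →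
        ε ≤ z → z ≤ 1 - ε →
          |x / z + y / (1 - z) - (Real.sqrt x + Real.sqrt y) ^ 2 -
              ((Real.sqrt x + Real.sqrt y) ^ ((4 : ℝ) / 3) /
                  (x ^ ((1 : ℝ) / 6) * y ^ ((1 : ℝ) / 6))) ^ 3 *
                (z - Real.sqrt x / (Real.sqrt x + Real.sqrt y)) ^ 2| ≤
            C₀ * (x + y) * |z - Real.sqrt x / (Real.sqrt x + Real.sqrt y)| ^ 3 := by
  have hs0 : 0 < Real.sqrt δ := Real.sqrt_pos.mpr hδ
  set s := Real.sqrt δ with hs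
  refine ⟨2 * (1 + 1 / s) ^ 3 / ε, by positivity, ?_⟩
  intro x y z hx hy hxy hyx hz1 hz2
  set a := Real.sqrt x with ha'
  set b := Real.sqrt y with hb'
  have ha : 0 < a := Real.sqrt_pos.mpr hx
  have hb : 0 < b := Real.sqrt_pos.mpr hy
  have hab : 0 < a + b := by linarith
  have hxa : x = a ^ 2 := (Real.sq_sqrt hx.le).symm
  have hyb : y = b ^ 2 := (Real.sq_sqrt hy.le).symm
  have hz0 : 0 < z := lt_of_lt_of_le hε hz1
  have h1z : ε ≤ 1 - z := by linarith
  have h1z0 : 0 < 1 - z := lt_of_lt_of_le hε h1z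
  -- cone bounds: s*b ≤ a and s*a ≤ b
  have hba : s * b ≤ a := by
    have : Real.sqrt (δ * y) ≤ Real.sqrt x := Real.sqrt_le_sqrt hxy
    rwa [Real.sqrt_mul hδ.le, ← hs, ← ha', ← hb'] at this
  have hab2 : s * a ≤ b := by
    have : Real.sqrt (δ * x) ≤ Real.sqrt y := Real.sqrt_le_sqrt hyx
    rwa [Real.sqrt_mul hδ.le, ← hs, ← ha', ← hb'] at this
  -- simplify rpow expression
  have hsig : ((a + b) ^ ((4 : ℝ) / 3) / (x ^ ((1 : ℝ) / 6) * y ^ ((1 : ℝ) / 6))) ^ 3 =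
      (a + b) ^ 4 / (a * b) := by
    rw [hxa, hyb]
    have h1 : ((a : ℝ) ^ 2) ^ ((1 : ℝ) / 6) = a ^ ((1 : ℝ) / 3) := by
      rw [← Real.rpow_natCast a 2, ← Real.rpow_mul ha.le]
      norm_num
    have h2 : ((b : ℝ) ^ 2) ^ ((1 : ℝ) / 6) = b ^ ((1 : ℝ) / 3) := by
      rw [← Real.rpow_natCast b 2, ← Real.rpow_mul hb.le]
      norm_num
    rw [h1, h2, div_pow, mul_pow]
    rw [← Real.rpow_natCast ((a + b) ^ ((4 : ℝ) / 3)) 3, ← Real.rpow_mul hab.le]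
    rw [← Real.rpow_natCast (a ^ ((1 : ℝ) / 3)) 3, ← Real.rpow_mul ha.le]
    rw [← Real.rpow_natCast (b ^ ((1 : ℝ) / 3)) 3, ← Real.rpow_mul hb.le]
    norm_num
  rw [hsig]
  set h := z - a / (a + b) with hh
  -- exact identity
  have key : x / z + y / (1 - z) - (a + b) ^ 2 - (a + b) ^ 4 / (a * b) * h ^ 2 =
      h ^ 3 * ((a + b) ^ 3 / (b * (1 - z)) - (a + b) ^ 3 / (a * z)) := by
    rw [hxa, hyb, hh]
    field_simp
    ring
  rw [key, abs_mul, abs_pow]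
  have hD : |(a + b) ^ 3 / (b * (1 - z)) - (a + b) ^ 3 / (a * z)| ≤
      2 * (1 + 1 / s) ^ 3 * (x + y) / ε := ?_
  · calc |h| ^ 3 * |(a + b) ^ 3 / (b * (1 - z)) - (a + b) ^ 3 / (a * z)|
        ≤ |h| ^ 3 * (2 * (1 + 1 / s) ^ 3 * (x + y) / ε) := by
          gcongr
        _ = 2 * (1 + 1 / s) ^ 3 / ε * (x + y) * |h| ^ 3 := by ring
  have hbound1 : (a + b) ^ 3 / (a * z) ≤ (1 + 1 / s) ^ 3 * (x + y) / ε := by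
    have hab3 : (a + b) ^ 3 ≤ ((1 + 1 / s) * a) ^ 3 := by
      gcongr
      have hba' : b ≤ a / s := (le_div_iff₀ hs0).mpr (by linarith)
      have heq : (1 + 1 / s) * a = a + a / s := by ring
      linarith
    calc (a + b) ^ 3 / (a * z) ≤ ((1 + 1 / s) * a) ^ 3 / (a * ε) := by
          gcongr
      _ = (1 + 1 / s) ^ 3 * a ^ 2 / ε := by
          rw [mul_pow]; field_simp
      _ ≤ (1 + 1 / s) ^ 3 * (x + y) / ε := by
          gcongr
          rw [hxa, hyb]; nlinarith
  have hbound2 : (a + b) ^ 3 / (b * (1 - z)) ≤ (1 + 1 / s) ^ 3 * (x + y) / ε := by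
    have hab3 : (a + b) ^ 3 ≤ ((1 + 1 / s) * b) ^ 3 := by
      gcongr
      have hab2' : a ≤ b / s := (le_div_iff₀ hs0).mpr (by linarith)
      have heq : (1 + 1 / s) * b = b + b / s := by ring
      linarith
    calc (a + b) ^ 3 / (b * (1 - z)) ≤ ((1 + 1 / s) * b) ^ 3 / (b * ε) := by
          gcongr
      _ = (1 + 1 / s) ^ 3 * b ^ 2 / ε := by
          rw [mul_pow]; field_simp
      _ ≤ (1 + 1 / s) ^ 3 * (x + y) / ε := by
          gcongr
          rw [hxa, hyb]; nlinarith
  have habs : |(a + b) ^ 3 / (b * (1 - z)) - (a + b) ^ 3 / (a * z)| ≤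
      (a + b) ^ 3 / (b * (1 - z)) + (a + b) ^ 3 / (a * z) := by
    refine (abs_sub _ _).trans ?_
    rw [abs_of_nonneg (by positivity), abs_of_nonneg (by positivity)]
  calc |(a + b) ^ 3 / (b * (1 - z)) - (a + b) ^ 3 / (a * z)|
      ≤ (a + b) ^ 3 / (b * (1 - z)) + (a + b) ^ 3 / (a * z) := habs
    _ ≤ (1 + 1 / s) ^ 3 * (x + y) / ε + (1 + 1 / s) ^ 3 * (x + y) / ε := by
        exact add_le_add hbound2 hbound1
    _ = 2 * (1 + 1 / s) ^ 3 * (x + y) / ε := by ring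
end

section
/- Fix δ > 0 and K ≥ 0, and define ζ_{x,y} = √x/(√x+√y). There exist positive constants c₀, C₀ depending only on (δ, K) such that for all (x,y) in the cone S_δ = {(x,y) ∈ ℝ²_{>0}: x ≥ δy, y ≥ δx} and all h with 0 ≤ h ≤ K(x+y): c₀·h/(x+y) ≤ ζ_{x+h,y} − ζ_{x,y} ≤ C₀·h/(x+y). -/
set_option maxHeartbeats 1000000 in
/-- Lipschitz behavior of the characteristic parameter `ζ_{x,y} = √x/(√x+√y)`
under horizontal shifts: on the cone `S_δ` and for `0 ≤ h ≤ K(x+y)`,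
`c₀ h/(x+y) ≤ ζ_{x+h,y} − ζ_{x,y} ≤ C₀ h/(x+y)`. -/
theorem minimizer_shift_estimate (δ K : ℝ) (hδ : 0 < δ) (hK : 0 ≤ K) :
    ∃ c₀ C₀ : ℝ, 0 < c₀ ∧ 0 < C₀ ∧
      ∀ x y h : ℝ, 0 < x → 0 < y → δ * y ≤ x → δ * x ≤ y →
        0 ≤ h → h ≤ K * (x + y) →
          c₀ * h / (x + y) ≤
              Real.sqrt (x + h) / (Real.sqrt (x + h) + Real.sqrt y) -
                Real.sqrt x / (Real.sqrt x + Real.sqrt y) ∧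
            Real.sqrt (x + h) / (Real.sqrt (x + h) + Real.sqrt y) -
                Real.sqrt x / (Real.sqrt x + Real.sqrt y) ≤
              C₀ * h / (x + y) := by
  set t := Real.sqrt δ with htdef
  set M := Real.sqrt (1 + K * (1 + δ) / δ) with hMdef
  have ht : 0 < t := Real.sqrt_pos.2 hδ
  have ht2 : t ^ 2 = δ := Real.sq_sqrt hδ.le
  have hMarg : (0:ℝ) < 1 + K * (1 + δ) / δ := by positivity
  have hM : 0 < M := Real.sqrt_pos.2 hMarg
  have hM2 : M ^ 2 = 1 + K * (1 + δ) / δ := Real.sq_sqrt hMarg.le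
  have hQ : 0 < (M + 1) * (M + 1 / t) * (1 + 1 / t) := by positivity
  refine ⟨t / ((M + 1) * (M + 1 / t) * (1 + 1 / t)), (δ + 1) / δ,
    div_pos ht hQ, by positivity, ?_⟩
  intro x y h hx hy hxy hyx hh hhK
  have hxh : 0 < x + h := by linarith
  set a := Real.sqrt x with hadef
  set b := Real.sqrt y with hbdef
  set s := Real.sqrt (x + h) with hsdef
  have ha : 0 < a := Real.sqrt_pos.2 hx
  have hb : 0 < b := Real.sqrt_pos.2 hy
  have hs : 0 < s := Real.sqrt_pos.2 hxh
  have ha2 : a ^ 2 = x := Real.sq_sqrt hx.le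
  have hb2 : b ^ 2 = y := Real.sq_sqrt hy.le
  have hs2 : s ^ 2 = x + h := Real.sq_sqrt hxh.le
  have hP : 0 < (s + a) * (s + b) * (a + b) := by positivity
  -- key identity
  have key : s / (s + b) - a / (a + b) = b * h / ((s + a) * (s + b) * (a + b)) := by
    have hh' : h = s ^ 2 - a ^ 2 := by rw [hs2, ha2]; ring
    rw [hh']
    field_simp
    ring
  rw [key]
  -- comparability facts
  have hyx' : y ≤ x / δ := by rw [le_div_iff₀ hδ]; linarith
  have hba : b ≤ a / t := by
    have h1 : b ≤ Real.sqrt (x / δ) := Real.sqrt_le_sqrt hyx'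
    rwa [Real.sqrt_div hx.le, ← hadef, ← htdef] at h1
  have hab : t * a ≤ b := by
    have h1 : Real.sqrt (δ * x) ≤ b := Real.sqrt_le_sqrt hyx
    rwa [Real.sqrt_mul hδ.le, ← hadef, ← htdef] at h1
  have hsa : s ≤ M * a := by
    have harg : x + h ≤ M ^ 2 * x := by
      rw [hM2]
      have : K * (x + y) ≤ K * (x + x / δ) := by
        apply mul_le_mul_of_nonneg_left _ hK; linarith
      have hxd : 0 < δ := hδ
      rw [add_mul, one_mul]
      have : K * (x + x / δ) = K * (1 + δ) / δ * x := by field_simp; ring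
      nlinarith [mul_le_mul_of_nonneg_left hyx' hK]
    have h1 : s ≤ Real.sqrt (M ^ 2 * x) := Real.sqrt_le_sqrt harg
    rwa [Real.sqrt_mul (by positivity), Real.sqrt_sq hM.le, ← hadef] at h1
  have hxy2 : x + y = a ^ 2 + b ^ 2 := by rw [ha2, hb2]
  constructor
  · -- lower bound
    rw [div_le_div_iff₀ (by linarith) hP]
    have h1 : s + a ≤ (M + 1) * a := by
      have : (M + 1) * a = M * a + a := by ring
      linarith
    have h2 : s + b ≤ (M + 1 / t) * a := by
      have : (M + 1 / t) * a = M * a + a / t := by ring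
      linarith
    have h3 : a + b ≤ (1 + 1 / t) * a := by
      have : (1 + 1 / t) * a = a + a / t := by ring
      linarith
    have hPle : (s + a) * (s + b) * (a + b) ≤
        ((M + 1) * (M + 1 / t) * (1 + 1 / t)) * a ^ 3 := by
      calc (s + a) * (s + b) * (a + b)
          ≤ ((M + 1) * a) * ((M + 1 / t) * a) * ((1 + 1 / t) * a) :=
            mul_le_mul (mul_le_mul h1 h2 (by positivity) (by positivity))
              h3 (by positivity) (by positivity)
        _ = ((M + 1) * (M + 1 / t) * (1 + 1 / t)) * a ^ 3 := by ring
    have hcQ : t / ((M + 1) * (M + 1 / t) * (1 + 1 / t)) *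
        ((M + 1) * (M + 1 / t) * (1 + 1 / t)) = t := div_mul_cancel₀ t hQ.ne'
    calc t / ((M + 1) * (M + 1 / t) * (1 + 1 / t)) * h * ((s + a) * (s + b) * (a + b))
        ≤ t / ((M + 1) * (M + 1 / t) * (1 + 1 / t)) * h *
          (((M + 1) * (M + 1 / t) * (1 + 1 / t)) * a ^ 3) := by
          apply mul_le_mul_of_nonneg_left hPle (by positivity)
      _ = (t / ((M + 1) * (M + 1 / t) * (1 + 1 / t)) *
          ((M + 1) * (M + 1 / t) * (1 + 1 / t))) * (h * a ^ 3) := by ring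
      _ = t * (h * a ^ 3) := by rw [hcQ]
      _ = (t * a) * (h * a ^ 2) := by ring
      _ ≤ b * (h * a ^ 2) := by
          apply mul_le_mul_of_nonneg_right hab (by positivity)
      _ ≤ b * h * (x + y) := by
          rw [hxy2]
          have e : b * h * (a ^ 2 + b ^ 2) = b * (h * a ^ 2) + b * h * b ^ 2 := by ring
          have : 0 ≤ b * h * b ^ 2 := by positivity
          linarith
  · -- upper bound
    rw [div_le_div_iff₀ hP (by linarith)]
    have hPge : a ^ 2 * b ≤ (s + a) * (s + b) * (a + b) := by
      calc a ^ 2 * b = a * b * a := by ring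
        _ ≤ (s + a) * (s + b) * (a + b) :=
            mul_le_mul (mul_le_mul (by linarith) (by linarith) hb.le (by positivity))
              (by linarith) ha.le (by positivity)
    have hb2a : b ^ 2 ≤ a ^ 2 / δ := by rw [le_div_iff₀ hδ]; nlinarith [hb2, ha2]
    calc b * h * (x + y) = b * h * (a ^ 2 + b ^ 2) := by rw [hxy2]
      _ ≤ b * h * (a ^ 2 + a ^ 2 / δ) := by
          apply mul_le_mul_of_nonneg_left _ (by positivity)
          linarith
      _ = (δ + 1) / δ * h * (a ^ 2 * b) := by field_simp
      _ ≤ (δ + 1) / δ * h * ((s + a) * (s + b) * (a + b)) := by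
          apply mul_le_mul_of_nonneg_left hPge (by positivity)
end

section
/- Let the last-passage times G_{u,v} over arbitrary real weights on ℤ² be defined as the maximum over up-right lattice paths of the sum of weights. Then for all u ≤ v in ℤ²: G_{u,v} − G_{u+(1,0),v} ≥ G_{u,v+(1,0)} − G_{u+(1,0),v+(1,0)}. -/
/-- Last-passage time over arbitrary real weights on `ℤ²`: the supremum (in
`EReal`, so `⊥ = −∞` when no path exists) over up-right lattice paths from `u`
to `v` of the sum of the weights along the path. -/
noncomputable def lppZ (w : ℤ × ℤ → ℝ) (u v : ℤ × ℤ) : EReal :=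
  sSup {S : EReal | ∃ (n : ℕ) (π : ℕ → ℤ × ℤ), π 0 = u ∧ π n = v ∧
    (∀ k < n, π (k + 1) = π k + (1, 0) ∨ π (k + 1) = π k + (0, 1)) ∧
    S = ((∑ k ∈ Finset.range (n + 1), w (π k) : ℝ) : EReal)}

/-!
Take a path `π` from `u` to `v + (1, 0)` and a path `σ` from `u + (1, 0)` to `v`. Since `π`
starts to the left of `σ` and ends to the right of it, the two paths meet; exchanging their
tails at the meeting point yields a path from `u` to `v` and a path from `u + (1, 0)` to
`v + (1, 0)` with the same total weight. Hence
`G(u, v + (1, 0)) + G(u + (1, 0), v) ≤ G(u, v) + G(u + (1, 0), v + (1, 0))`, and the theorem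
follows once the last-passage times involved are known to be finite. When `u.1 = v.1` there is
no path from `u + (1, 0)` to `v`, and the right-hand side is `+∞`.
-/

open Finset

lemma EReal.sSup_add_sSup_le {s t : Set EReal} {c : EReal} (h : ∀ x ∈ s, ∀ y ∈ t, x + y ≤ c) :
    sSup s + sSup t ≤ c := by
  refine EReal.add_le_of_forall_lt fun a ha b hb => ?_
  obtain ⟨x, hx, hax⟩ := lt_sSup_iff.1 ha
  obtain ⟨y, hy, hby⟩ := lt_sSup_iff.1 hb
  exact (add_le_add hax.le hby.le).trans (h x hx y hy)

lemma exists_eq_zero_of_le_add_one {f : ℕ → ℤ} {m : ℕ} (h0 : f 0 ≤ 0) (hm : 0 ≤ f m)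
    (hstep : ∀ k < m, f (k + 1) ≤ f k + 1) : ∃ j ≤ m, f j = 0 := by
  induction m with
  | zero => exact ⟨0, le_rfl, le_antisymm h0 hm⟩
  | succ m ih =>
    by_cases hfm : 0 ≤ f m
    · obtain ⟨j, hj, hfj⟩ := ih hfm fun k hk => hstep k (by omega)
      exact ⟨j, by omega, hfj⟩
    · exact ⟨m + 1, le_rfl, by have := hstep m (by omega); omega⟩

def IsUpRightPath (π : ℕ → ℤ × ℤ) (n : ℕ) : Prop :=
  ∀ k < n, π (k + 1) = π k + (1, 0) ∨ π (k + 1) = π k + (0, 1)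

def pathWeight (w : ℤ × ℤ → ℝ) (π : ℕ → ℤ × ℤ) (n : ℕ) : ℝ :=
  ∑ k ∈ range (n + 1), w (π k)

lemma pathWeight_add (w : ℤ × ℤ → ℝ) (π : ℕ → ℤ × ℤ) (i q : ℕ) :
    pathWeight w π (i + q) = pathWeight w π i + ∑ l ∈ range q, w (π (i + 1 + l)) := by
  rw [pathWeight, pathWeight, add_right_comm, sum_range_add]

def splice (π σ : ℕ → ℤ × ℤ) (i j : ℕ) : ℕ → ℤ × ℤ :=
  fun k => if k ≤ i then π k else σ (j + (k - i))

section splice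

variable {π σ : ℕ → ℤ × ℤ} {i j q : ℕ}

lemma splice_zero : splice π σ i j 0 = π 0 := by
  simp [splice]

lemma splice_add (h : π i = σ j) : splice π σ i j (i + q) = σ (j + q) := by
  rcases q.eq_zero_or_pos with rfl | hq
  · simpa [splice] using h
  · simp [splice, show ¬ i + q ≤ i by omega]

lemma pathWeight_splice (w : ℤ × ℤ → ℝ) :
    pathWeight w (splice π σ i j) (i + q) =
      pathWeight w π i + ∑ l ∈ range q, w (σ (j + 1 + l)) := by
  rw [pathWeight_add]
  congr 1
  · exact sum_congr rfl fun k hk => by simp [splice, Nat.lt_succ_iff.1 (mem_range.1 hk)]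
  · exact sum_congr rfl fun l _ => by
      simp [splice, add_assoc]

end splice

namespace IsUpRightPath

variable {π σ : ℕ → ℤ × ℤ} {n m : ℕ}

lemma le_succ (h : IsUpRightPath π n) {k : ℕ} (hk : k < n) : π k ≤ π (k + 1) := by
  rcases h k hk with h' | h' <;> simp [h', Prod.le_def]

lemma fst_succ_le (h : IsUpRightPath π n) {k : ℕ} (hk : k < n) :
    (π (k + 1)).1 ≤ (π k).1 + 1 := by
  rcases h k hk with h' | h' <;> simp [h']

lemma fst_add_snd (h : IsUpRightPath π n) {k : ℕ} (hk : k ≤ n) :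
    (π k).1 + (π k).2 = (π 0).1 + (π 0).2 + k := by
  induction k with
  | zero => simp
  | succ k ih =>
    have := ih (by omega)
    rcases h k (by omega) with h' | h' <;> simp only [h', Prod.fst_add, Prod.snd_add] <;> omega

lemma le_of_le (h : IsUpRightPath π n) {k l : ℕ} (hkl : k ≤ l) (hl : l ≤ n) : π k ≤ π l := by
  induction l, hkl using Nat.le_induction with
  | base => exact le_rfl
  | succ l _ ih => exact (ih (by omega)).trans (h.le_succ (by omega))

lemma injOn (h : IsUpRightPath π n) : Set.InjOn π (range (n + 1)) := by
  intro k hk l hl hkl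
  have hk' := h.fst_add_snd (Nat.lt_succ_iff.1 (mem_range.1 hk))
  have hl' := h.fst_add_snd (Nat.lt_succ_iff.1 (mem_range.1 hl))
  rw [hkl] at hk'
  omega

lemma mem_Icc (h : IsUpRightPath π n) {k : ℕ} (hk : k ≤ n) : π k ∈ Icc (π 0) (π n) :=
  Finset.mem_Icc.2 ⟨h.le_of_le k.zero_le hk, h.le_of_le hk le_rfl⟩

lemma splice (hπ : IsUpRightPath π i) (hσ : IsUpRightPath σ (j + q)) (h : π i = σ j) :
    IsUpRightPath (_root_.splice π σ i j) (i + q) := by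
  intro k hk
  simp only [_root_.splice]
  rcases lt_trichotomy k i with hki | rfl | hki
  · simpa [show k ≤ i by omega, show k + 1 ≤ i by omega] using hπ k hki
  · simpa [h] using hσ j (by omega)
  · simpa [show ¬ k ≤ i by omega, show ¬ k + 1 ≤ i by omega,
      show j + (k + 1 - i) = j + (k - i) + 1 by omega] using hσ (j + (k - i)) (by omega)

lemma exists_eq (hπ : IsUpRightPath π m) (hσ : IsUpRightPath σ m)
    (hdiag : (π 0).1 + (π 0).2 = (σ 0).1 + (σ 0).2)
    (h0 : (π 0).1 ≤ (σ 0).1) (hm : (σ m).1 ≤ (π m).1) : ∃ j ≤ m, π j = σ j := by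
  obtain ⟨j, hj, hfj⟩ := exists_eq_zero_of_le_add_one (f := fun k => (π k).1 - (σ k).1)
    (by simpa using h0) (by simpa using hm) fun k hk => by
      have := hπ.fst_succ_le hk
      have := (Prod.le_def.1 (hσ.le_succ hk)).1
      omega
  have := hπ.fst_add_snd hj
  have := hσ.fst_add_snd hj
  exact ⟨j, hj, Prod.ext (by omega) (by omega)⟩

lemma exists_crossing {u v : ℤ × ℤ} (hπ : IsUpRightPath π n) (hπ0 : π 0 = u)
    (hπn : π n = v + (1, 0)) (hσ : IsUpRightPath σ m) (hσ0 : σ 0 = u + (1, 0)) (hσm : σ m = v) :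
    n = m + 2 ∧ ∃ j ≤ m, π (j + 1) = σ j := by
  have hπdiag := hπ.fst_add_snd le_rfl
  have hσdiag := hσ.fst_add_snd le_rfl
  simp only [hπ0, hπn, hσ0, hσm, Prod.fst_add, Prod.snd_add] at hπdiag hσdiag
  obtain rfl : n = m + 2 := by omega
  -- `π (k + 1)` and `σ k` lie on the same antidiagonal, so the shifted `π` can be compared with `σ`.
  have hπ' : IsUpRightPath (fun k => π (k + 1)) m := fun k hk => hπ (k + 1) (by omega)
  have hdiag : (π 1).1 + (π 1).2 = (σ 0).1 + (σ 0).2 := by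
    have := hπ.fst_add_snd (k := 1) (by omega)
    simp only [hπ0, hσ0, Prod.fst_add, Prod.snd_add] at this ⊢
    omega
  have hstart : (π 1).1 ≤ (σ 0).1 := by
    have := hπ.fst_succ_le (k := 0) (by omega)
    simp only [hπ0, hσ0, Prod.fst_add] at this ⊢
    omega
  have hend : (σ m).1 ≤ (π (m + 1)).1 := by
    have := hπ.fst_succ_le (k := m + 1) (by omega)
    simp only [hπn, Prod.fst_add] at this
    rw [hσm]
    omega
  exact ⟨rfl, hπ'.exists_eq hσ hdiag hstart hend⟩

end IsUpRightPath

section lppZ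

variable (w : ℤ × ℤ → ℝ) {a b : ℤ × ℤ} {π : ℕ → ℤ × ℤ} {n : ℕ}

lemma le_lppZ (h0 : π 0 = a) (hn : π n = b) (hπ : IsUpRightPath π n) :
    (pathWeight w π n : EReal) ≤ lppZ w a b :=
  le_sSup ⟨n, π, h0, hn, hπ, rfl⟩

lemma pathWeight_le_sum_abs (h0 : π 0 = a) (hn : π n = b) (hπ : IsUpRightPath π n) :
    pathWeight w π n ≤ ∑ p ∈ Icc a b, |w p| :=
  calc pathWeight w π n ≤ ∑ k ∈ range (n + 1), |w (π k)| :=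
        sum_le_sum fun k _ => le_abs_self _
    _ = ∑ p ∈ (range (n + 1)).image π, |w p| := (sum_image (f := fun p => |w p|) hπ.injOn).symm
    _ ≤ ∑ p ∈ Icc a b, |w p| := by
        refine sum_le_sum_of_subset_of_nonneg ?_ fun _ _ _ => abs_nonneg _
        rintro _ hp
        obtain ⟨k, hk, rfl⟩ := mem_image.1 hp
        exact h0 ▸ hn ▸ hπ.mem_Icc (Nat.lt_succ_iff.1 (mem_range.1 hk))

lemma lppZ_ne_top (a b : ℤ × ℤ) : lppZ w a b ≠ ⊤ := by
  refine ne_top_of_le_ne_top (EReal.coe_ne_top (∑ p ∈ Icc a b, |w p|)) (sSup_le ?_)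
  rintro _ ⟨n, π, h0, hn, hπ, rfl⟩
  exact EReal.coe_le_coe_iff.2 (pathWeight_le_sum_abs w h0 hn hπ)

lemma lppZ_eq_bot (hab : ¬ a ≤ b) : lppZ w a b = ⊥ := by
  refine sSup_eq_bot.2 ?_
  rintro _ ⟨n, π, h0, hn, hπ, rfl⟩
  exact absurd (h0 ▸ hn ▸ IsUpRightPath.le_of_le hπ n.zero_le le_rfl) hab

/-- First all horizontal steps, then all vertical ones. -/
lemma exists_isUpRightPath (hab : a ≤ b) :
    ∃ (n : ℕ) (π : ℕ → ℤ × ℤ), π 0 = a ∧ π n = b ∧ IsUpRightPath π n := by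
  obtain ⟨h1, h2⟩ := Prod.le_def.1 hab
  set p := (b.1 - a.1).toNat
  set q := (b.2 - a.2).toNat
  refine ⟨p + q, fun k => a + (((min k p : ℕ) : ℤ), ((k - p : ℕ) : ℤ)), by simp, ?_, fun k _ => ?_⟩
  · ext <;> simp <;> omega
  · by_cases hk : k < p
    · left
      ext <;> simp <;> omega
    · right
      ext <;> simp <;> omega

lemma lppZ_ne_bot (hab : a ≤ b) : lppZ w a b ≠ ⊥ := by
  obtain ⟨n, π, h0, hn, hπ⟩ := exists_isUpRightPath hab
  exact ne_bot_of_le_ne_bot (EReal.coe_ne_bot _) (le_lppZ w h0 hn hπ)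

lemma pathWeight_add_pathWeight_le_lppZ_add_lppZ {u v : ℤ × ℤ} {σ : ℕ → ℤ × ℤ} {m : ℕ}
    (hπ0 : π 0 = u) (hπn : π n = v + (1, 0)) (hπ : IsUpRightPath π n)
    (hσ0 : σ 0 = u + (1, 0)) (hσm : σ m = v) (hσ : IsUpRightPath σ m) :
    (pathWeight w π n : EReal) + pathWeight w σ m ≤
      lppZ w u v + lppZ w (u + (1, 0)) (v + (1, 0)) := by
  obtain ⟨rfl, j, hj, hcross⟩ := hπ.exists_crossing hπ0 hπn hσ hσ0 hσm
  obtain ⟨q, rfl⟩ := Nat.exists_eq_add_of_le hj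
  have hτ : IsUpRightPath (splice π σ (j + 1) j) (j + 1 + q) :=
    IsUpRightPath.splice (fun k hk => hπ k (by omega)) hσ hcross
  have hρ : IsUpRightPath (splice σ π j (j + 1)) (j + (q + 1)) :=
    IsUpRightPath.splice (fun k hk => hσ k (by omega))
      (by rwa [show j + 1 + (q + 1) = j + q + 2 by omega]) hcross.symm
  have hweight : pathWeight w π (j + 1 + (q + 1)) + pathWeight w σ (j + q) =
      pathWeight w (splice π σ (j + 1) j) (j + 1 + q) +
        pathWeight w (splice σ π j (j + 1)) (j + (q + 1)) := by
    rw [pathWeight_add w π (j + 1), pathWeight_add w σ j, pathWeight_splice, pathWeight_splice]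
    ring
  rw [← EReal.coe_add, show j + q + 2 = j + 1 + (q + 1) by omega, hweight, EReal.coe_add]
  refine add_le_add (le_lppZ w (by rw [splice_zero, hπ0]) ?_ hτ)
    (le_lppZ w (by rw [splice_zero, hσ0]) ?_ hρ)
  · rw [splice_add hcross, hσm]
  · rw [splice_add hcross.symm, show j + 1 + (q + 1) = j + q + 2 by omega, hπn]

theorem lppZ_add_lppZ_le (u v : ℤ × ℤ) :
    lppZ w u (v + (1, 0)) + lppZ w (u + (1, 0)) v ≤
      lppZ w u v + lppZ w (u + (1, 0)) (v + (1, 0)) := by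
  refine EReal.sSup_add_sSup_le ?_
  rintro _ ⟨n, π, hπ0, hπn, hπ, rfl⟩ _ ⟨m, σ, hσ0, hσm, hσ, rfl⟩
  exact pathWeight_add_pathWeight_le_lppZ_add_lppZ w hπ0 hπn hπ hσ0 hσm hσ

end lppZ

/-- Deterministic comparison inequality for last-passage increments:
moving the endpoint right decreases the horizontal increment at the start. -/
theorem lpp_increment_comparison_b (w : ℤ × ℤ → ℝ) (u v : ℤ × ℤ)
    (h1 : u.1 ≤ v.1) (h2 : u.2 ≤ v.2) :
    lppZ w u (v + (1, 0)) - lppZ w (u + (1, 0)) (v + (1, 0)) ≤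
      lppZ w u v - lppZ w (u + (1, 0)) v := by
  have huv : u ≤ v := Prod.le_def.2 ⟨h1, h2⟩
  have he : ((0 : ℤ × ℤ) ≤ (1, 0)) := by simp [Prod.le_def]
  by_cases hD : u + (1, 0) ≤ v
  · have hcross := lppZ_add_lppZ_le w u v
    lift lppZ w u (v + (1, 0)) to ℝ using
      ⟨lppZ_ne_top w _ _, lppZ_ne_bot w (huv.trans (le_add_of_nonneg_right he))⟩ with a
    lift lppZ w (u + (1, 0)) (v + (1, 0)) to ℝ using
      ⟨lppZ_ne_top w _ _, lppZ_ne_bot w (add_le_add_left huv _)⟩ with b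
    lift lppZ w u v to ℝ using ⟨lppZ_ne_top w _ _, lppZ_ne_bot w huv⟩ with c
    lift lppZ w (u + (1, 0)) v to ℝ using ⟨lppZ_ne_top w _ _, lppZ_ne_bot w hD⟩ with d
    norm_cast at hcross ⊢
    linarith
  · rw [lppZ_eq_bot w hD, EReal.sub_bot (lppZ_ne_bot w huv)]
    exact le_top
end
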